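/- Let (A, μ, f) and (B, ν, g) be linking triples. If (A, μ, f) and the orthogonal sum (A × B, μ ⊕ ν, f ⊕ g) are both metabolic, then (B, ν, g) is metabolic. -/

import Mathlib

/-!
The orthogonal complement `H⊥` of a subgroup `H` for a linking form satisfies
`|H| · |H⊥| = |G|` (from `G ≅ Hom(G, ℚ/ℤ)` and the injectivity of `ℚ/ℤ`), hence `H⊥⊥ = H`, and the
metabolizers are exactly the subgroups with `H⊥ = H`. Given metabolizers `M ⊆ A` and
`N ⊆ A × B`, let `L = {b | ∃ m ∈ M, (m, b) ∈ N}`. Then `L⊥ = {b | (0, b) ∈ (N ∩ (M × B))⊥}`, and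
`N ∩ (M × B) = N⊥ ∩ (M × 0)⊥ = (N + M × 0)⊥`, so `(N ∩ (M × B))⊥ = N + M × 0`, which gives
`L⊥ ⊆ L`; isotropy of `M` and `N` gives `L ⊆ L⊥`. Finally `g` vanishes on `L` because `f ⊕ g`
vanishes on `N` and `f` on `M`.
-/

/-- A linking form on a (finite) abelian group `G`: a `ℚ/ℤ`-valued pairing that is
additive in each variable, symmetric, and nondegenerate. -/
def IsLinkingForm {G : Type*} [AddCommGroup G] (l : G → G → AddCircle (1 : ℚ)) : Prop :=
  (∀ x y z : G, l (x + y) z = l x z + l y z) ∧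
  (∀ x y z : G, l x (y + z) = l x y + l x z) ∧
  (∀ x y : G, l x y = l y x) ∧
  (∀ x : G, x ≠ 0 → ∃ y : G, l x y ≠ 0)

/-- A linking triple `(G, l, f)` is metabolic if there is a subgroup `G₁` with
`|G₁|² = |G|` on which both `l` and `f` vanish. -/
def IsMetabolic {G : Type*} [AddCommGroup G]
    (l : G → G → AddCircle (1 : ℚ)) (f : G → ℚ) : Prop :=
  ∃ G₁ : AddSubgroup G, Nat.card G₁ ^ 2 = Nat.card G ∧
    (∀ x ∈ G₁, ∀ y ∈ G₁, l x y = 0) ∧ (∀ x ∈ G₁, f x = 0)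

/-- A linking triple `(G, l, f)` is hyperbolic if `G = G₁ ⊕ G₂` with `G₁ ≅ G₂`,
`l` vanishing on each of `G₁`, `G₂`, and `f` vanishing on `G₁ ∪ G₂`. -/
def IsHyperbolic {G : Type*} [AddCommGroup G]
    (l : G → G → AddCircle (1 : ℚ)) (f : G → ℚ) : Prop :=
  ∃ G₁ G₂ : AddSubgroup G,
    G₁ ⊓ G₂ = ⊥ ∧ G₁ ⊔ G₂ = ⊤ ∧ Nonempty (G₁ ≃+ G₂) ∧
    (∀ x ∈ G₁, ∀ y ∈ G₁, l x y = 0) ∧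
    (∀ x ∈ G₂, ∀ y ∈ G₂, l x y = 0) ∧
    (∀ x ∈ G₁, f x = 0) ∧ (∀ x ∈ G₂, f x = 0)

open Function

local notation "𝕋" => AddCircle (1 : ℚ)

def ZMod.addMonoidHomEquivTorsion (n : ℕ) (A : Type*) [AddCommGroup A] :
    (ZMod n →+ A) ≃ {a : A // n • a = 0} :=
  (ZMod.lift n).symm.trans <| (zmultiplesHom A).symm.subtypeEquiv fun f => by
    simp [← natCast_zsmul, ← map_zsmul]

lemma finite_addMonoidHom_zmod_and_card_le (n : ℕ) [NeZero n] :
    Finite (ZMod n →+ 𝕋) ∧ Nat.card (ZMod n →+ 𝕋) ≤ n := by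
  have hfin := AddCircle.finite_torsion (1 : ℚ) (Nat.pos_of_neZero n)
  have hcard := AddCircle.card_torsion_le_of_isSMulRegular (1 : ℚ) n (NeZero.ne n)
    (.of_right_eq_zero_of_smul fun _ ↦ by simp [NeZero.ne n])
  let e := ZMod.addMonoidHomEquivTorsion n 𝕋
  refine ⟨@Finite.of_equiv _ _ hfin.to_subtype e.symm, ?_⟩
  rwa [Nat.card_congr e, ← Set.coe_ofPred, Nat.card_coe_set_eq, ← Nat.cast_le (α := ℕ∞),
    hfin.cast_ncard_eq]

lemma finite_addMonoidHom_and_card_le (X : Type*) [AddCommGroup X] [Finite X] :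
    Finite (X →+ 𝕋) ∧ Nat.card (X →+ 𝕋) ≤ Nat.card X := by
  classical
  obtain ⟨ι, _, n, hn, ⟨e⟩⟩ := AddCommGroup.equiv_directSum_zmod_of_finite' X
  have (i : ι) : NeZero (n i) := ⟨by have := hn i; omega⟩
  have := fun i ↦ (finite_addMonoidHom_zmod_and_card_le (n i)).1
  let eX := e.trans (DirectSum.addEquivProd _)
  let eDual := eX.addMonoidHomCongrLeft.trans (Pi.addMonoidHomAddEquiv _ 𝕋)
  refine ⟨.of_equiv _ eDual.symm.toEquiv, ?_⟩
  rw [Nat.card_congr eDual.toEquiv, Nat.card_congr eX.toEquiv, Nat.card_pi, Nat.card_pi]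
  exact Finset.prod_le_prod' fun i _ ↦
    (finite_addMonoidHom_zmod_and_card_le (n i)).2.trans (Nat.card_zmod (n i)).ge

instance (X : Type*) [AddCommGroup X] [Finite X] : Finite (X →+ 𝕋) :=
  (finite_addMonoidHom_and_card_le X).1

lemma card_addMonoidHom_addCircle (X : Type*) [AddCommGroup X] [Finite X] :
    Nat.card (X →+ 𝕋) = Nat.card X := by
  refine (finite_addMonoidHom_and_card_le X).2.antisymm ?_
  have hev : Injective (AddMonoidHom.eval (M := X) (N := 𝕋)) :=
    (injective_iff_map_eq_zero _).2 fun x hx ↦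
      CharacterModule.eq_zero_of_character_apply fun c ↦ DFunLike.congr_fun hx c
  exact (Nat.card_le_card_of_injective _ hev).trans (finite_addMonoidHom_and_card_le _).2

namespace IsLinkingForm

variable {G : Type*} [AddCommGroup G] {l : G → G → 𝕋}

def toAddMonoidHom (hl : IsLinkingForm l) : G →+ G →+ 𝕋 :=
  AddMonoidHom.mk' (fun x ↦ AddMonoidHom.mk' (l x) (hl.2.1 x)) fun x y ↦ by
    ext z; exact hl.1 x y z

@[simp] lemma toAddMonoidHom_apply (hl : IsLinkingForm l) (x y : G) :
    hl.toAddMonoidHom x y = l x y := rfl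

lemma map_zero_left (hl : IsLinkingForm l) (y : G) : l 0 y = 0 :=
  DFunLike.congr_fun (map_zero hl.toAddMonoidHom) y

lemma map_zero_right (hl : IsLinkingForm l) (x : G) : l x 0 = 0 := map_zero (hl.toAddMonoidHom x)

def orthogonal (hl : IsLinkingForm l) (H : AddSubgroup G) : AddSubgroup G :=
  (hl.toAddMonoidHom.compl₂ H.subtype).ker

lemma mem_orthogonal (hl : IsLinkingForm l) {H : AddSubgroup G} {x : G} :
    x ∈ hl.orthogonal H ↔ ∀ y ∈ H, l x y = 0 := by
  simp [orthogonal, DFunLike.ext_iff]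

lemma toAddMonoidHom_bijective [Finite G] (hl : IsLinkingForm l) :
    Bijective hl.toAddMonoidHom := by
  refine (Nat.bijective_iff_injective_and_card _).2
    ⟨(injective_iff_map_eq_zero _).2 fun x hx ↦ ?_, (card_addMonoidHom_addCircle G).symm⟩
  by_contra hx0
  obtain ⟨y, hy⟩ := hl.2.2.2 x hx0
  exact hy (DFunLike.congr_fun hx y)

lemma card_mul_card_orthogonal [Finite G] (hl : IsLinkingForm l) (H : AddSubgroup G) :
    Nat.card H * Nat.card (hl.orthogonal H) = Nat.card G := by
  have hsurj : Surjective (hl.toAddMonoidHom.compl₂ H.subtype) :=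
    (CharacterModule.dual_surjective_of_injective H.subtype.toIntLinearMap
      Subtype.val_injective).comp hl.toAddMonoidHom_bijective.2
  rw [AddSubgroup.card_eq_card_quotient_mul_card_addSubgroup (hl.orthogonal H), orthogonal,
    Nat.card_congr (QuotientAddGroup.quotientKerEquivOfSurjective _ hsurj).toEquiv,
    card_addMonoidHom_addCircle]

lemma le_orthogonal_orthogonal (hl : IsLinkingForm l) (H : AddSubgroup G) :
    H ≤ hl.orthogonal (hl.orthogonal H) := fun x hx ↦
  hl.mem_orthogonal.2 fun y hy ↦ (hl.2.2.1 x y).trans (hl.mem_orthogonal.1 hy x hx)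

lemma orthogonal_orthogonal [Finite G] (hl : IsLinkingForm l) (H : AddSubgroup G) :
    hl.orthogonal (hl.orthogonal H) = H := by
  refine (AddSubgroup.eq_of_le_of_card_ge (hl.le_orthogonal_orthogonal H) ?_).symm
  have hcard : Nat.card (hl.orthogonal H) * Nat.card (hl.orthogonal (hl.orthogonal H)) =
      Nat.card (hl.orthogonal H) * Nat.card H := by
    rw [hl.card_mul_card_orthogonal, ← hl.card_mul_card_orthogonal H, mul_comm]
  exact (Nat.eq_of_mul_eq_mul_left Nat.card_pos hcard).le

lemma orthogonal_sup (hl : IsLinkingForm l) (H K : AddSubgroup G) :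
    hl.orthogonal (H ⊔ K) = hl.orthogonal H ⊓ hl.orthogonal K := by
  ext x
  simp only [AddSubgroup.mem_inf, mem_orthogonal]
  refine ⟨fun h ↦ ⟨fun y hy ↦ h y (AddSubgroup.mem_sup_left hy),
    fun y hy ↦ h y (AddSubgroup.mem_sup_right hy)⟩, ?_⟩
  rintro ⟨hH, hK⟩ _ hy
  obtain ⟨u, hu, v, hv, rfl⟩ := AddSubgroup.mem_sup.1 hy
  rw [hl.2.1, hH u hu, hK v hv, add_zero]

lemma orthogonal_eq_self_of_isotropic_of_card_sq [Finite G] (hl : IsLinkingForm l)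
    {H : AddSubgroup G} (hiso : ∀ x ∈ H, ∀ y ∈ H, l x y = 0)
    (hcard : Nat.card H ^ 2 = Nat.card G) : hl.orthogonal H = H := by
  refine (AddSubgroup.eq_of_le_of_card_ge (fun x hx ↦ hl.mem_orthogonal.2 (hiso x hx)) ?_).symm
  rw [sq, ← hl.card_mul_card_orthogonal H] at hcard
  exact (Nat.eq_of_mul_eq_mul_left Nat.card_pos hcard).ge

lemma card_sq_of_orthogonal_eq_self [Finite G] (hl : IsLinkingForm l) {H : AddSubgroup G}
    (h : hl.orthogonal H = H) : Nat.card H ^ 2 = Nat.card G := by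
  rw [sq]
  nth_rw 2 [← h]
  exact hl.card_mul_card_orthogonal H

section Prod

variable {A B : Type*} [AddCommGroup A] [AddCommGroup B] {μ : A → A → 𝕋} {ν : B → B → 𝕋}

lemma prod (hμ : IsLinkingForm μ) (hν : IsLinkingForm ν) :
    IsLinkingForm (fun x y : A × B ↦ μ x.1 y.1 + ν x.2 y.2) := by
  refine ⟨fun x y z ↦ ?_, fun x y z ↦ ?_,
    fun x y ↦ congrArg₂ (· + ·) (hμ.2.2.1 x.1 y.1) (hν.2.2.1 x.2 y.2), ?_⟩
  · simp only [Prod.fst_add, Prod.snd_add, hμ.1, hν.1]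
    abel
  · simp only [Prod.fst_add, Prod.snd_add, hμ.2.1, hν.2.1]
    abel
  rintro ⟨a, b⟩ hab
  by_cases ha : a = 0
  · subst ha
    obtain ⟨y, hy⟩ := hν.2.2.2 b fun hb ↦ hab (by rw [hb]; rfl)
    exact ⟨(0, y), by simpa [hμ.map_zero_right] using hy⟩
  · obtain ⟨y, hy⟩ := hμ.2.2.2 a ha
    exact ⟨(y, 0), by simpa [hν.map_zero_right] using hy⟩

lemma orthogonal_prod_bot (hμ : IsLinkingForm μ) (hν : IsLinkingForm ν) (M : AddSubgroup A) :
    (hμ.prod hν).orthogonal (M.prod ⊥) = (hμ.orthogonal M).prod ⊤ := by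
  ext ⟨a, b⟩
  simp only [mem_orthogonal, AddSubgroup.mem_prod, AddSubgroup.mem_bot, AddSubgroup.mem_top,
    and_true, Prod.forall]
  refine ⟨fun h y hy ↦ by simpa [hν.map_zero_right] using h y 0 ⟨hy, rfl⟩, ?_⟩
  rintro h a' _ ⟨ha', rfl⟩
  rw [h a' ha', hν.map_zero_right, add_zero]

lemma orthogonal_map_snd (hμ : IsLinkingForm μ) (hν : IsLinkingForm ν)
    (K : AddSubgroup (A × B)) :
    hν.orthogonal (K.map (AddMonoidHom.snd A B)) =
      ((hμ.prod hν).orthogonal K).comap (AddMonoidHom.inr A B) := by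
  ext b
  simp only [mem_orthogonal, AddSubgroup.mem_map, AddMonoidHom.coe_snd, Prod.exists,
    exists_eq_right, forall_exists_index, AddSubgroup.mem_comap, AddMonoidHom.inr_apply,
    hμ.map_zero_left, zero_add, Prod.forall]
  exact forall_comm

theorem orthogonal_map_snd_inf_prod_top [Finite A] [Finite B] (hμ : IsLinkingForm μ)
    (hν : IsLinkingForm ν) {M : AddSubgroup A} {N : AddSubgroup (A × B)}
    (hM : hμ.orthogonal M = M) (hN : (hμ.prod hν).orthogonal N = N) :
    hν.orthogonal ((N ⊓ M.prod ⊤).map (AddMonoidHom.snd A B)) =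
      (N ⊓ M.prod ⊤).map (AddMonoidHom.snd A B) := by
  have hP : N ⊓ M.prod ⊤ = (hμ.prod hν).orthogonal (N ⊔ M.prod ⊥) := by
    rw [orthogonal_sup, orthogonal_prod_bot hμ hν, hN, hM]
  refine le_antisymm ?_ ?_
  · rw [orthogonal_map_snd hμ hν, hP, orthogonal_orthogonal, ← hP]
    intro b hb
    obtain ⟨n, hn, m, hm, hnm⟩ := AddSubgroup.mem_sup.1 (AddSubgroup.mem_comap.1 hb)
    obtain ⟨hm₁, hm₂⟩ := AddSubgroup.mem_prod.1 hm
    rw [AddSubgroup.mem_bot] at hm₂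
    have hn₁ : n.1 = -m.1 := eq_neg_of_add_eq_zero_left (congrArg Prod.fst hnm)
    have hn₂ : n.2 = b := by simpa [hm₂] using congrArg Prod.snd hnm
    exact ⟨n, AddSubgroup.mem_inf.2
      ⟨hn, AddSubgroup.mem_prod.2 ⟨hn₁ ▸ M.neg_mem hm₁, AddSubgroup.mem_top _⟩⟩, hn₂⟩
  · rintro _ ⟨x, ⟨hxN, hxM⟩, rfl⟩
    refine hν.mem_orthogonal.2 ?_
    rintro _ ⟨y, ⟨hyN, hyM⟩, rfl⟩
    have hxy := (hμ.prod hν).mem_orthogonal.1 (hN.symm ▸ hxN) y hyN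
    have hxy₁ := hμ.mem_orthogonal.1 (hM.symm ▸ (AddSubgroup.mem_prod.1 hxM).1) y.1
      (AddSubgroup.mem_prod.1 hyM).1
    simpa [hxy₁] using hxy

end Prod

end IsLinkingForm

/-- If `(A, μ, f)` and `(A × B, μ ⊕ ν, f ⊕ g)` are both metabolic, then
`(B, ν, g)` is metabolic. -/
theorem stmt2 {A B : Type*} [AddCommGroup A] [Finite A] [AddCommGroup B] [Finite B]
    (μ : A → A → AddCircle (1 : ℚ)) (f : A → ℚ)
    (ν : B → B → AddCircle (1 : ℚ)) (g : B → ℚ)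
    (hμ : IsLinkingForm μ) (hν : IsLinkingForm ν)
    (hA : IsMetabolic μ f)
    (hAB : IsMetabolic (fun x y : A × B => μ x.1 y.1 + ν x.2 y.2)
      (fun x : A × B => f x.1 + g x.2)) :
    IsMetabolic ν g := by
  obtain ⟨M, hMcard, hMiso, hMf⟩ := hA
  obtain ⟨N, hNcard, hNiso, hNf⟩ := hAB
  have hL := hμ.orthogonal_map_snd_inf_prod_top hν
    (hμ.orthogonal_eq_self_of_isotropic_of_card_sq hMiso hMcard)
    ((hμ.prod hν).orthogonal_eq_self_of_isotropic_of_card_sq hNiso hNcard)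
  refine ⟨_, hν.card_sq_of_orthogonal_eq_self hL, fun x hx y hy ↦ ?_, ?_⟩
  · rw [← hL] at hx
    exact hν.mem_orthogonal.1 hx y hy
  · rintro _ ⟨x, ⟨hxN, hxM⟩, rfl⟩
    have hfg : f x.1 + g x.2 = 0 := hNf x hxN
    rw [hMf x.1 (AddSubgroup.mem_prod.1 hxM).1, zero_add] at hfg
    exact hfg
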